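/- Let P and Q be row-stochastic matrices on a finite set S such that P_ε := (1−ε)P + εQ is irreducible for every ε ∈ (0,1), and let π^{(ε)} denote the unique stationary distribution of P_ε. Then for each i ∈ S there exist real polynomials p_i and q_i such that q_i(ε) ≠ 0 and π^{(ε)}(i) = p_i(ε)/q_i(ε) for every ε ∈ (0,1); in particular, ε ↦ π^{(ε)}(i) is a rational (hence real-analytic) function of ε on (0,1). -/

import Mathlib

open Filter Topology

/-- A matrix is row-stochastic: nonnegative entries and each row sums to 1. -/
def RowStochastic {S : Type*} [Fintype S] (P : Matrix S S ℝ) : Prop :=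
  (∀ i j, 0 ≤ P i j) ∧ ∀ i, ∑ j, P i j = 1

/-- A probability row vector `π` is a stationary distribution of `P`. -/
def StationaryDist {S : Type*} [Fintype S] (P : Matrix S S ℝ) (π : S → ℝ) : Prop :=
  (∀ i, 0 ≤ π i) ∧ (∑ i, π i = 1) ∧ ∀ j, ∑ i, π i * P i j = π j

/-- Irreducibility: any state leads to any other in some number `k ≥ 1` of steps. -/
def MatIrreducible {S : Type*} [Fintype S] [DecidableEq S] (P : Matrix S S ℝ) : Prop :=
  ∀ i j, ∃ k, 1 ≤ k ∧ 0 < (P ^ k) i j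

/-! For a row-stochastic `A`, a probability vector `π` is stationary iff
`π (1 + J - A) = 𝟙`, where `J` is the all-ones matrix. When `A` is irreducible this square
system has a unique solution: a nonzero left kernel vector `v` would be `A`-invariant with
zero sum, so `v + |v|` would be a nonnegative invariant vector that is positive where `v > 0`
and zero where `v < 0`; irreducibility rules this out. Along `P_ε = (1 - ε) P + ε Q` the
system matrix is the evaluation at `ε` of a polynomial matrix, so Cramer's rule writes
`π^{(ε)}(i)` as a cofactor sum over the determinant, both polynomials in `ε`. -/

open Matrix Polynomial

section Stochastic

variable {S : Type*} [Fintype S]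

lemma Matrix.vecMul_pow_eq_self {R : Type*} [Semiring R] [DecidableEq S] {A : Matrix S S R}
    {u : S → R} (h : u ᵥ* A = u) (k : ℕ) : u ᵥ* A ^ k = u := by
  induction k with
  | zero => simp
  | succ k ih => rw [pow_succ, ← vecMul_vecMul, ih, h]

lemma Matrix.sum_vecMul_of_mem_rowStochastic {R : Type*} [CommSemiring R] [PartialOrder R]
    [IsOrderedRing R] [DecidableEq S] {A : Matrix S S R} (hA : A ∈ rowStochastic R S)
    (u : S → R) : ∑ j, (u ᵥ* A) j = ∑ i, u i := by
  simp only [← dotProduct_one, ← dotProduct_mulVec, one_vecMul_of_mem_rowStochastic hA]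

variable [DecidableEq S]

lemma pos_of_vecMul_eq_self {A : Matrix S S ℝ} (hA : ∀ i j, 0 ≤ A i j)
    (hirr : MatIrreducible A) {u : S → ℝ} (hu : 0 ≤ u) (hfix : u ᵥ* A = u) {i : S}
    (hi : 0 < u i) (j : S) : 0 < u j := by
  obtain ⟨k, -, hk⟩ := hirr i j
  rw [← vecMul_pow_eq_self hfix k]
  exact lt_of_lt_of_le (mul_pos hi hk) <| Finset.single_le_sum
    (fun l _ => mul_nonneg (hu l) (pow_apply_nonneg hA k l j)) (Finset.mem_univ i)

lemma Matrix.abs_vecMul_eq_self {R : Type*} [CommRing R] [LinearOrder R] [IsStrictOrderedRing R]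
    {A : Matrix S S R} (hA : A ∈ rowStochastic R S) {v : S → R}
    (hfix : v ᵥ* A = v) : |v| ᵥ* A = |v| := by
  have hle : ∀ j, |v| j ≤ (|v| ᵥ* A) j := fun j => by
    calc |v| j = |(v ᵥ* A) j| := by rw [hfix, Pi.abs_apply]
      _ = |∑ i, v i * A i j| := rfl
      _ ≤ ∑ i, |v i * A i j| := Finset.abs_sum_le_sum_abs _ _
      _ = (|v| ᵥ* A) j := by
        simp only [abs_mul, abs_of_nonneg (nonneg_of_mem_rowStochastic hA)]; rfl
  have hsum := sum_vecMul_of_mem_rowStochastic hA |v|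
  funext j
  exact ((Finset.sum_eq_sum_iff_of_le fun j _ => hle j).1 hsum.symm j (Finset.mem_univ j)).symm

lemma eq_zero_of_vecMul_eq_self_of_sum_eq_zero {A : Matrix S S ℝ} (hA : A ∈ rowStochastic ℝ S)
    (hirr : MatIrreducible A) {v : S → ℝ} (hfix : v ᵥ* A = v) (hsum : ∑ i, v i = 0) :
    v = 0 := by
  by_contra hv
  obtain ⟨j, hj⟩ : ∃ j, v j ≠ 0 := by simpa [funext_iff] using hv
  obtain ⟨iPos, -, hiPos⟩ := Finset.exists_pos_of_sum_zero_of_exists_nonzero v hsum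
    ⟨j, Finset.mem_univ j, hj⟩
  obtain ⟨iNeg, -, hiNeg⟩ := Finset.exists_pos_of_sum_zero_of_exists_nonzero (-v)
    (by simp [hsum]) ⟨j, Finset.mem_univ j, by simpa using hj⟩
  have hw : (v + |v|) ᵥ* A = v + |v| := by rw [add_vecMul, abs_vecMul_eq_self hA hfix, hfix]
  have hpos := pos_of_vecMul_eq_self (fun _ _ => nonneg_of_mem_rowStochastic hA) hirr
    (fun k => add_abs_nonneg (v k)) hw (i := iPos) (by simp [abs_of_pos hiPos, hiPos]) iNeg
  rw [Pi.neg_apply, neg_pos] at hiNeg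
  simp [abs_of_neg hiNeg] at hpos

end Stochastic

section StationarySystem

variable {S R : Type*} [DecidableEq S]

def stationarySystem [Ring R] (A : Matrix S S R) : Matrix S S R :=
  1 + of (fun _ _ => 1) - A

lemma vecMul_stationarySystem [Fintype S] [Ring R] (A : Matrix S S R) (u : S → R) :
    u ᵥ* stationarySystem A = u + (fun _ => ∑ i, u i) - u ᵥ* A := by
  rw [stationarySystem, vecMul_sub, vecMul_add, vecMul_one]
  congr
  ext j
  simp [vecMul, dotProduct]

lemma RingHom.map_stationarySystem {R' : Type*} [Ring R] [Ring R'] (f : R →+* R')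
    (A : Matrix S S R) : (stationarySystem A).map f = stationarySystem (A.map f) := by
  ext i j
  by_cases h : i = j <;> simp [stationarySystem, one_apply, h]

lemma StationaryDist.vecMul_stationarySystem [Fintype S] {A : Matrix S S ℝ} {π : S → ℝ}
    (hπ : StationaryDist A π) : π ᵥ* stationarySystem A = fun _ => 1 := by
  obtain ⟨-, hsum, hfix⟩ := hπ
  have : π ᵥ* A = π := funext hfix
  rw [_root_.vecMul_stationarySystem, this, hsum]
  exact add_sub_cancel_left π _

lemma det_stationarySystem_ne_zero [Fintype S] {A : Matrix S S ℝ} (hA : A ∈ rowStochastic ℝ S)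
    (hirr : MatIrreducible A) : (stationarySystem A).det ≠ 0 := by
  intro h
  obtain ⟨v, hv, hker⟩ := exists_vecMul_eq_zero_iff.2 h
  rw [_root_.vecMul_stationarySystem, sub_eq_zero] at hker
  have hcard : Fintype.card S • ∑ i, v i = 0 := by
    simpa [Finset.sum_add_distrib, sum_vecMul_of_mem_rowStochastic hA] using
      congrArg (fun w => ∑ j, w j) hker
  have hsum : ∑ i, v i = 0 := by
    cases isEmpty_or_nonempty S
    · exact absurd (Subsingleton.elim v 0) hv
    · exact (smul_eq_zero.1 hcard).resolve_left Fintype.card_ne_zero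
  refine hv (eq_zero_of_vecMul_eq_self_of_sum_eq_zero hA hirr ?_ hsum)
  rw [← hker, hsum]
  exact add_zero v

end StationarySystem

section Cramer

variable {S : Type*} [Fintype S] [DecidableEq S]

lemma Matrix.det_smul_eq_vecMul_adjugate {R : Type*} [CommRing R] {M : Matrix S S R}
    {u b : S → R} (h : u ᵥ* M = b) : M.det • u = b ᵥ* M.adjugate := by
  rw [← h, vecMul_vecMul, mul_adjugate, vecMul_smul, vecMul_one]

lemma exists_eval_div_eval_of_vecMul_map_eval {K : Type*} [Field K] (M : Matrix S S K[X])
    (b : S → K) (T : Set K) (u : K → S → K) (hu : ∀ ε ∈ T, u ε ᵥ* M.map (eval ε) = b)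
    (hdet : ∀ ε ∈ T, (M.map (eval ε)).det ≠ 0) (i : S) :
    ∃ p q : K[X], ∀ ε ∈ T, q.eval ε ≠ 0 ∧ u ε i = p.eval ε / q.eval ε := by
  refine ⟨((C ∘ b) ᵥ* M.adjugate) i, M.det, fun ε hε => ?_⟩
  have hq : M.det.eval ε = (M.map (eval ε)).det := by
    simpa using (evalRingHom ε).map_det M
  have hp : (((C ∘ b) ᵥ* M.adjugate) i).eval ε = (b ᵥ* (M.map (eval ε)).adjugate) i := by
    rw [← coe_evalRingHom, ← RingHom.mapMatrix_apply, ← RingHom.map_adjugate]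
    simp [vecMul, dotProduct]
  rw [hq, hp, ← det_smul_eq_vecMul_adjugate (hu ε hε)]
  refine ⟨hdet ε hε, ?_⟩
  simp [hdet ε hε]

end Cramer

lemma Matrix.map_eval_one_sub_X_smul_add_X_smul {S R : Type*} [CommRing R]
    (P Q : Matrix S S R) (ε : R) :
    (((1 : R[X]) - X) • P.map C + (X : R[X]) • Q.map C).map (eval ε) = (1 - ε) • P + ε • Q := by
  ext i j
  simp
  ring

theorem perturbed_stationary_is_rational_in_epsilon_general
    {S : Type*} [Fintype S] [DecidableEq S]
    (P Q : Matrix S S ℝ) (hP : RowStochastic P) (hQ : RowStochastic Q)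
    (Pe : ℝ → Matrix S S ℝ)
    (hPe : ∀ ε, Pe ε = (1 - ε) • P + ε • Q)
    (hPeirr : ∀ ε ∈ Set.Ioo (0 : ℝ) 1, MatIrreducible (Pe ε))
    (πe : ℝ → S → ℝ)
    (hπe : ∀ ε ∈ Set.Ioo (0 : ℝ) 1, StationaryDist (Pe ε) (πe ε)) :
    ∀ i : S, ∃ p q : Polynomial ℝ, ∀ ε ∈ Set.Ioo (0 : ℝ) 1,
      q.eval ε ≠ 0 ∧ πe ε i = p.eval ε / q.eval ε := by
  have hstoch : ∀ ε ∈ Set.Ioo (0 : ℝ) 1, Pe ε ∈ rowStochastic ℝ S := fun ε ⟨h0, h1⟩ => by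
    rw [hPe]
    exact convex_rowStochastic (mem_rowStochastic_iff_sum.2 hP) (mem_rowStochastic_iff_sum.2 hQ)
      (by linarith) h0.le (by ring)
  obtain ⟨M, hM⟩ : ∃ M : Matrix S S ℝ[X], ∀ ε, M.map (eval ε) = stationarySystem (Pe ε) :=
    ⟨stationarySystem (((1 : ℝ[X]) - X) • P.map C + (X : ℝ[X]) • Q.map C), fun ε => by
      rw [← coe_evalRingHom, RingHom.map_stationarySystem, coe_evalRingHom,
        map_eval_one_sub_X_smul_add_X_smul, hPe]⟩
  intro i
  refine exists_eval_div_eval_of_vecMul_map_eval M (fun _ => 1) _ πe (fun ε hε => ?_)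
    (fun ε hε => ?_) i
  · rw [hM]
    exact (hπe ε hε).vecMul_stationarySystem
  · rw [hM]
    exact det_stationarySystem_ne_zero (hstoch ε hε) (hPeirr ε hε)

/-- Each coordinate of the stationary distribution of `P_ε := (1−ε)P + εQ` is a
rational function of `ε` on `(0,1)`: there are polynomials `p_i, q_i` with
`q_i(ε) ≠ 0` and `π^{(ε)}(i) = p_i(ε)/q_i(ε)` for all `ε ∈ (0,1)`. -/
theorem perturbed_stationary_is_rational_in_epsilon
    {S : Type*} [Fintype S] [DecidableEq S] [Nonempty S]
    (P Q : Matrix S S ℝ) (hP : RowStochastic P) (hQ : RowStochastic Q)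
    (Pe : ℝ → Matrix S S ℝ)
    (hPe : ∀ ε, Pe ε = (1 - ε) • P + ε • Q)
    (hPeirr : ∀ ε ∈ Set.Ioo (0 : ℝ) 1, MatIrreducible (Pe ε))
    (πe : ℝ → S → ℝ)
    (hπe : ∀ ε ∈ Set.Ioo (0 : ℝ) 1, StationaryDist (Pe ε) (πe ε)) :
    ∀ i : S, ∃ p q : Polynomial ℝ, ∀ ε ∈ Set.Ioo (0 : ℝ) 1,
      q.eval ε ≠ 0 ∧ πe ε i = p.eval ε / q.eval ε :=
  perturbed_stationary_is_rational_in_epsilon_general P Q hP hQ Pe hPe hPeirr πe hπe
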